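/- Let q = 2^m with m even, and define g_0(x) = x^4 + x^3 on F_q. Then for every integer k ≥ 1, the number ω_0(k) of elements of F_q with exactly k preimages under g_0 satisfies: ω_0(1) = 2(q−1)/3, ω_0(2) = 1, ω_0(4) = (q−4)/12, and ω_0(k) = 0 for all other k ≥ 1. -/

import Mathlib

/-!
In characteristic 2, `g(x + s) = g(x) + s (x² + s x + s²(s + 1))` for `g(x) = x⁴ + x³`, so two
distinct points `x`, `x + s` of a fibre satisfy `x² + s x + s²(s + 1) = 0`, and the fibre is then
the one over `s³(s + 1)³`. As `g(w) + s³(s + 1)³ = (w² + s w + s²(s + 1)) (w² + (s + 1) w + (s + 1)² s)`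
and a root `c` of `c² + c + 1` (which exists because `3 ∣ q - 1` when `m` is even) makes the second
quadratic solvable whenever the first one is, every fibre over `y ≠ 0` has `0`, `1` or `4` points,
while `g⁻¹(0) = {0, 1}`. The ordered pairs `x ≠ z` with `g x = g z` are parametrised by the `a` with
`t = a² + a + 1 ≠ 0` through `(x, z) = (t a, t (a + 1))`, so there are `q - 2` of them. The counts
`ω₀(k)` then follow from `∑ k ω₀(k) = q` and `∑ k (k - 1) ω₀(k) = q - 2`.
-/

open Finset

theorem three_dvd_two_pow_sub_one {m : ℕ} (hm : Even m) : 3 ∣ 2 ^ m - 1 := by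
  obtain ⟨j, rfl⟩ := hm
  simpa [← two_mul, pow_mul] using Nat.sub_dvd_pow_sub_pow 4 1 j

theorem FiniteField.exists_sq_add_self_add_one_eq_zero {F : Type*} [Field F] [Fintype F]
    (h : 3 ∣ Fintype.card F - 1) : ∃ c : F, c ^ 2 + c + 1 = 0 := by
  classical
  obtain ⟨ζ, hζ⟩ := exists_prime_orderOf_dvd_card 3 (Fintype.card_units (α := F) ▸ h)
  have hprim : IsPrimitiveRoot (ζ : F) 3 :=
    IsPrimitiveRoot.coe_units_iff.2 (by simpa [hζ] using IsPrimitiveRoot.orderOf ζ)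
  have h := hprim.geom_sum_eq_zero (by norm_num)
  simp only [sum_range_succ, sum_range_zero, pow_zero, pow_one, zero_add] at h
  exact ⟨ζ, by linear_combination h⟩

theorem FiniteField.charP_two_of_card_eq_two_pow {F : Type*} [Field F] [Fintype F] {m : ℕ}
    (hF : Fintype.card F = 2 ^ m) : CharP F 2 := by
  have h := FiniteField.cast_card_eq_zero F
  rw [hF, Nat.cast_pow, Nat.cast_ofNat] at h
  exact CharTwo.of_one_ne_zero_of_two_eq_zero one_ne_zero (pow_eq_zero_iff'.1 h).1

theorem Finset.sum_comp_eq_sum_card_filter_smul {α β M : Type*} [Fintype α] [DecidableEq β]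
    [AddCommMonoid M] {N : α → β} {t : Finset β} (hN : ∀ y, N y ∈ t) (f : β → M) :
    ∑ y, f (N y) = ∑ k ∈ t, #{y | N y = k} • f k := by
  rw [← sum_fiberwise_of_maps_to' (fun y _ ↦ hN y)]
  exact sum_congr rfl fun k _ ↦ sum_const _

theorem Finset.card_filter_ne_and_eq_eq_sum {α β : Type*} [Fintype α] [DecidableEq α]
    [Fintype β] [DecidableEq β] (f : α → β) :
    #{p : α × α | p.1 ≠ p.2 ∧ f p.1 = f p.2} =
      ∑ y, (#{x | f x = y} * #{x | f x = y} - #{x | f x = y}) := by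
  rw [card_eq_sum_card_fiberwise (f := fun p ↦ f p.1) (t := univ) fun _ _ ↦ mem_univ _]
  refine sum_congr rfl fun y _ ↦ ?_
  rw [← offDiag_card]
  congr 1
  ext ⟨x, z⟩
  simp only [mem_filter, mem_univ, true_and, mem_offDiag]
  constructor
  · rintro ⟨⟨hxz, h⟩, rfl⟩
    exact ⟨rfl, h.symm, hxz⟩
  · rintro ⟨rfl, hz, hxz⟩
    exact ⟨⟨hxz, hz.symm⟩, rfl⟩

def omegaZero (R : Type*) [Semiring R] [Fintype R] [DecidableEq R] (k : ℕ) : ℕ :=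
  #{y : R | #{x | x ^ 4 + x ^ 3 = y} = k}

theorem ncard_setOf_ncard_eq_omegaZero {R : Type*} [Semiring R] [Fintype R] [DecidableEq R]
    (k : ℕ) : {y : R | {x : R | x ^ 4 + x ^ 3 = y}.ncard = k}.ncard = omegaZero R k := by
  simp only [omegaZero, Set.ncard_eq_toFinset_card', Set.toFinset_ofPred]

namespace CharTwo

variable {R : Type*} [CommRing R] [CharP R 2]

theorem add_pow_four_add_add_pow_three (x s : R) :
    (x + s) ^ 4 + (x + s) ^ 3 = x ^ 4 + x ^ 3 + s * (x ^ 2 + s * x + s ^ 2 * (s + 1)) := by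
  linear_combination (2 * s ^ 3 * x + s ^ 2 * x + 3 * s ^ 2 * x ^ 2 + s * x ^ 2 + 2 * s * x ^ 3) *
    two_eq_zero (R := R)

theorem pow_four_add_pow_three_add_eq_mul (w s : R) :
    w ^ 4 + w ^ 3 + s ^ 3 * (s + 1) ^ 3 =
      (w ^ 2 + s * w + s ^ 2 * (s + 1)) * (w ^ 2 + (s + 1) * w + (s + 1) ^ 2 * s) := by
  linear_combination (-s ^ 4 * w - 2 * s ^ 3 * w - s ^ 3 * w ^ 2 - s ^ 2 * w - 2 * s ^ 2 * w ^ 2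
    - s * w ^ 2 - s * w ^ 3) * two_eq_zero (R := R)

variable [IsDomain R]

theorem sq_add_mul_eq_sq_add_mul_iff {s w r : R} :
    w ^ 2 + s * w = r ^ 2 + s * r ↔ w = r ∨ w = r + s := by
  have h : w ^ 2 + s * w - (r ^ 2 + s * r) = (w - r) * (w - (r + s)) := by
    linear_combination (s * w - r ^ 2 - s * r + w * r) * two_eq_zero (R := R)
  rw [← sub_eq_zero, h, mul_eq_zero, sub_eq_zero, sub_eq_zero]

variable [Fintype R] [DecidableEq R]

theorem filter_sq_add_mul_add_eq_zero {s t r : R} (hr : r ^ 2 + s * r + t = 0) :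
    ({w | w ^ 2 + s * w + t = 0} : Finset R) = {r, r + s} := by
  ext w
  rw [mem_filter_univ, mem_insert, mem_singleton, ← sq_add_mul_eq_sq_add_mul_iff]
  exact ⟨fun h ↦ by linear_combination h - hr, fun h ↦ by linear_combination h + hr⟩

theorem card_filter_sq_add_mul_add_eq_zero {s t r : R} (hs : s ≠ 0)
    (hr : r ^ 2 + s * r + t = 0) : #{w | w ^ 2 + s * w + t = 0} = 2 := by
  rw [filter_sq_add_mul_add_eq_zero hr, card_pair]
  simpa using hs

end CharTwo

section CharTwoField

open CharTwo

variable {F : Type*} [Field F] [CharP F 2]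

theorem sq_add_mul_add_eq_zero_of_pow_four_add_pow_three_eq {x z : F} (hxz : x ≠ z)
    (h : x ^ 4 + x ^ 3 = z ^ 4 + z ^ 3) :
    x ^ 2 + (x + z) * x + (x + z) ^ 2 * (x + z + 1) = 0 := by
  have hs : x + z ≠ 0 := fun h ↦ hxz (CharTwo.add_eq_zero.1 h)
  have key := add_pow_four_add_add_pow_three x (x + z)
  rw [CharTwo.add_cancel_left, ← h, left_eq_add] at key
  exact (mul_eq_zero.1 key).resolve_left hs

theorem sq_div_add_div_add_one_eq_add_of_pow_four_add_pow_three_eq {x z : F} (hxz : x ≠ z)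
    (h : x ^ 4 + x ^ 3 = z ^ 4 + z ^ 3) :
    (x / (x + z)) ^ 2 + x / (x + z) + 1 = x + z := by
  have hs : x + z ≠ 0 := fun h ↦ hxz (CharTwo.add_eq_zero.1 h)
  have hq := sq_add_mul_add_eq_zero_of_pow_four_add_pow_three_eq hxz h
  field_simp
  linear_combination hq - (x + z) ^ 3 * two_eq_zero (R := F)

variable [Fintype F] [DecidableEq F]

theorem card_filter_ne_and_pow_four_add_pow_three_eq :
    #{p : F × F | p.1 ≠ p.2 ∧ p.1 ^ 4 + p.1 ^ 3 = p.2 ^ 4 + p.2 ^ 3} =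
      #{a : F | a ^ 2 + a + 1 ≠ 0} := by
  refine card_nbij' (fun p ↦ p.1 / (p.1 + p.2))
    (fun a ↦ ((a ^ 2 + a + 1) * a, (a ^ 2 + a + 1) * (a + 1))) ?_ ?_ ?_ ?_
  · rintro ⟨x, z⟩ hp
    simp only [coe_filter, mem_univ, true_and, Set.mem_ofPred_eq] at hp ⊢
    rw [sq_div_add_div_add_one_eq_add_of_pow_four_add_pow_three_eq hp.1 hp.2]
    exact fun h ↦ hp.1 (CharTwo.add_eq_zero.1 h)
  · intro a ha
    simp only [coe_filter, mem_univ, true_and, Set.mem_ofPred_eq] at ha ⊢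
    set t := a ^ 2 + a + 1 with ht
    have hz : t * (a + 1) = t * a + t := by ring
    refine ⟨by simpa [hz] using ha, ?_⟩
    rw [hz, add_pow_four_add_add_pow_three, left_eq_add]
    linear_combination -t ^ 3 * ht + t ^ 4 * two_eq_zero (R := F)
  · rintro ⟨x, z⟩ hp
    simp only [coe_filter, mem_univ, true_and, Set.mem_ofPred_eq] at hp
    have hs : x + z ≠ 0 := fun h ↦ hp.1 (CharTwo.add_eq_zero.1 h)
    dsimp only
    rw [sq_div_add_div_add_one_eq_add_of_pow_four_add_pow_three_eq hp.1 hp.2, Prod.mk.injEq]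
    constructor <;> field_simp
    linear_combination x * two_eq_zero (R := F)
  · intro a ha
    simp only [coe_filter, mem_univ, true_and, Set.mem_ofPred_eq] at ha
    have hden : (a ^ 2 + a + 1) * a + (a ^ 2 + a + 1) * (a + 1) = a ^ 2 + a + 1 := by
      linear_combination (a ^ 2 + a + 1) * a * two_eq_zero (R := F)
    simp only [hden, mul_div_cancel_left₀ _ ha]

theorem card_filter_pow_four_add_pow_three_eq_zero : #{x : F | x ^ 4 + x ^ 3 = 0} = 2 := by
  have hfiber : ({x | x ^ 4 + x ^ 3 = 0} : Finset F) = {0, 1} := by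
    ext x
    rw [mem_filter_univ, mem_insert, mem_singleton, show x ^ 4 + x ^ 3 = x ^ 3 * (x + 1) by ring,
      mul_eq_zero, pow_eq_zero_iff three_ne_zero, CharTwo.add_eq_zero]
  rw [hfiber, card_pair zero_ne_one]

theorem card_filter_pow_four_add_pow_three_eq_four {c : F} (hc : c ^ 2 + c + 1 = 0)
    {x z y : F} (hxz : x ≠ z) (hx : x ^ 4 + x ^ 3 = y) (hz : z ^ 4 + z ^ 3 = y) (hy : y ≠ 0) :
    #{w | w ^ 4 + w ^ 3 = y} = 4 := by
  set s := x + z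
  have hs : s ≠ 0 := fun h ↦ hxz (CharTwo.add_eq_zero.1 h)
  have hx' : x ^ 2 + s * x + s ^ 2 * (s + 1) = 0 :=
    sq_add_mul_add_eq_zero_of_pow_four_add_pow_three_eq hxz (hx.trans hz.symm)
  clear_value s
  have hys : y = s ^ 3 * (s + 1) ^ 3 := by
    linear_combination -hx + pow_four_add_pow_three_add_eq_mul x s +
      (x ^ 2 + (s + 1) * x + (s + 1) ^ 2 * s) * hx' - s ^ 3 * (s + 1) ^ 3 * two_eq_zero (R := F)
  have hs1 : s + 1 ≠ 0 := by
    intro h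
    simp [hys, h] at hy
  -- `(s + 1) b` with `b = x / s + c`, which solves `b² + b = s`
  have hu : ((s + 1) * (x / s + c)) ^ 2 + (s + 1) * ((s + 1) * (x / s + c)) +
      (s + 1) ^ 2 * s = 0 := by
    field_simp
    linear_combination (s + 1) ^ 2 * hx' + (s + 1) ^ 2 * s ^ 2 * hc +
      (s + 1) ^ 2 * s * (x * c - s) * two_eq_zero (R := F)
  have hfiber : ({w | w ^ 4 + w ^ 3 = y} : Finset F) =
      ({w | w ^ 2 + s * w + s ^ 2 * (s + 1) = 0} : Finset F) ∪
        ({w | w ^ 2 + (s + 1) * w + (s + 1) ^ 2 * s = 0} : Finset F) := by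
    ext w
    rw [mem_union, mem_filter_univ, mem_filter_univ, mem_filter_univ, ← mul_eq_zero,
      ← pow_four_add_pow_three_add_eq_mul, CharTwo.add_eq_zero, hys]
  have hdisj : Disjoint ({w | w ^ 2 + s * w + s ^ 2 * (s + 1) = 0} : Finset F)
      ({w | w ^ 2 + (s + 1) * w + (s + 1) ^ 2 * s = 0} : Finset F) := by
    refine disjoint_filter.2 fun w _ h1 h2 ↦ mul_ne_zero (pow_ne_zero 2 hs) (pow_ne_zero 2 hs1) ?_
    linear_combination (1 + w - s ^ 2) * h1 - (w - s ^ 2) * h2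
  rw [hfiber, card_union_of_disjoint hdisj, card_filter_sq_add_mul_add_eq_zero hs hx',
    card_filter_sq_add_mul_add_eq_zero hs1 hu]

theorem card_filter_pow_four_add_pow_three_eq_mem_of_ne_zero {c : F} (hc : c ^ 2 + c + 1 = 0)
    {y : F} (hy : y ≠ 0) : #{x | x ^ 4 + x ^ 3 = y} ∈ ({0, 1, 4} : Finset ℕ) := by
  rcases le_or_gt #{x | x ^ 4 + x ^ 3 = y} 1 with h | h
  · simp only [mem_insert, mem_singleton]
    omega
  · obtain ⟨x, hx, z, hz, hxz⟩ := one_lt_card.1 h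
    rw [mem_filter_univ] at hx hz
    rw [card_filter_pow_four_add_pow_three_eq_four hc hxz hx hz hy]
    simp

theorem card_filter_pow_four_add_pow_three_eq_mem {c : F} (hc : c ^ 2 + c + 1 = 0) (y : F) :
    #{x | x ^ 4 + x ^ 3 = y} ∈ ({0, 1, 2, 4} : Finset ℕ) := by
  rcases eq_or_ne y 0 with rfl | hy
  · simp [card_filter_pow_four_add_pow_three_eq_zero]
  · exact mem_of_subset (by decide) (card_filter_pow_four_add_pow_three_eq_mem_of_ne_zero hc hy)

theorem card_filter_pow_four_add_pow_three_eq_eq_two_iff {c : F} (hc : c ^ 2 + c + 1 = 0)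
    {y : F} : #{x | x ^ 4 + x ^ 3 = y} = 2 ↔ y = 0 := by
  refine ⟨fun h ↦ by_contra fun hy ↦ ?_, fun h ↦ h ▸ card_filter_pow_four_add_pow_three_eq_zero⟩
  simpa [h] using card_filter_pow_four_add_pow_three_eq_mem_of_ne_zero hc hy

theorem card_filter_sq_add_self_add_one_ne_zero_add_two {c : F} (hc : c ^ 2 + c + 1 = 0) :
    #{a : F | a ^ 2 + a + 1 ≠ 0} + 2 = Fintype.card F := by
  have h := card_filter_sq_add_mul_add_eq_zero (s := 1) (t := 1) one_ne_zero
    (by linear_combination hc : c ^ 2 + 1 * c + 1 = 0)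
  simp only [one_mul] at h
  have := card_filter_add_card_filter_not (s := univ) fun a : F ↦ a ^ 2 + a + 1 = 0
  rw [card_univ] at this
  simp only [ne_eq]
  omega

theorem omegaZero_two {c : F} (hc : c ^ 2 + c + 1 = 0) : omegaZero F 2 = 1 := by
  rw [omegaZero, card_eq_one]
  exact ⟨0, ext fun y ↦ by simp [card_filter_pow_four_add_pow_three_eq_eq_two_iff hc]⟩

theorem omegaZero_eq_zero {c : F} (hc : c ^ 2 + c + 1 = 0) {k : ℕ}
    (hk : k ∉ ({0, 1, 2, 4} : Finset ℕ)) : omegaZero F k = 0 :=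
  card_eq_zero.2 <| filter_eq_empty_iff.2 fun y _ h ↦
    hk (h ▸ card_filter_pow_four_add_pow_three_eq_mem hc y)

theorem omegaZero_one_add_two_mul_two_add_four_mul_four {c : F} (hc : c ^ 2 + c + 1 = 0) :
    omegaZero F 1 + 2 * omegaZero F 2 + 4 * omegaZero F 4 = Fintype.card F := by
  have h := sum_comp_eq_sum_card_filter_smul (card_filter_pow_four_add_pow_three_eq_mem hc)
    fun k ↦ k
  rw [← card_eq_sum_card_fiberwise fun _ _ ↦ mem_univ _, card_univ, sum_insert (by decide),
    sum_insert (by decide), sum_insert (by decide), sum_singleton] at h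
  simp only [omegaZero, smul_eq_mul] at h ⊢
  omega

theorem two_mul_omegaZero_two_add_twelve_mul_four_add_two {c : F} (hc : c ^ 2 + c + 1 = 0) :
    2 * omegaZero F 2 + 12 * omegaZero F 4 + 2 = Fintype.card F := by
  have h := sum_comp_eq_sum_card_filter_smul (card_filter_pow_four_add_pow_three_eq_mem hc)
    fun k ↦ k * k - k
  rw [← card_filter_ne_and_eq_eq_sum, card_filter_ne_and_pow_four_add_pow_three_eq,
    sum_insert (by decide), sum_insert (by decide), sum_insert (by decide), sum_singleton] at h
  simp only [omegaZero, smul_eq_mul] at h ⊢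
  have := card_filter_sq_add_self_add_one_ne_zero_add_two hc
  omega

end CharTwoField

theorem omega_zero_m_even_general (m : ℕ) (hme : Even m)
    (F : Type*) [Field F] [Fintype F] (hF : Fintype.card F = 2 ^ m) :
    (({y : F | {x : F | x ^ 4 + x ^ 3 = y}.ncard = 1}.ncard : ℚ) = 2 * (2 ^ m - 1) / 3) ∧
    ({y : F | {x : F | x ^ 4 + x ^ 3 = y}.ncard = 2}.ncard = 1) ∧
    (({y : F | {x : F | x ^ 4 + x ^ 3 = y}.ncard = 4}.ncard : ℚ) = (2 ^ m - 4) / 12) ∧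
    (∀ k : ℕ, 1 ≤ k → k ≠ 1 → k ≠ 2 → k ≠ 4 →
      {y : F | {x : F | x ^ 4 + x ^ 3 = y}.ncard = k}.ncard = 0) := by
  classical
  have := FiniteField.charP_two_of_card_eq_two_pow hF
  obtain ⟨c, hc⟩ :=
    FiniteField.exists_sq_add_self_add_one_eq_zero (hF ▸ three_dvd_two_pow_sub_one hme)
  have h₁ := omegaZero_one_add_two_mul_two_add_four_mul_four hc
  have h₂ := two_mul_omegaZero_two_add_twelve_mul_four_add_two hc
  rw [omegaZero_two hc, hF] at h₁ h₂
  qify at h₁ h₂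
  simp only [ncard_setOf_ncard_eq_omegaZero]
  refine ⟨?_, omegaZero_two hc, ?_, fun k hk hk₁ hk₂ hk₄ ↦ omegaZero_eq_zero hc ?_⟩
  · rw [eq_div_iff three_ne_zero]
    linarith
  · rw [eq_div_iff (by norm_num)]
    linarith
  · simp only [mem_insert, mem_singleton]
    omega

/-- For `q = 2^m` with `m` even and positive and `g_0(x) = x^4 + x^3` on `F_q`:
`ω_0(1) = 2(q−1)/3`, `ω_0(2) = 1`, `ω_0(4) = (q−4)/12`, and `ω_0(k) = 0` for all other
`k ≥ 1`. -/
theorem omega_zero_m_even (m : ℕ) (hm : 0 < m) (hme : Even m)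
    (F : Type*) [Field F] [Fintype F] (hF : Fintype.card F = 2 ^ m) :
    (({y : F | {x : F | x ^ 4 + x ^ 3 = y}.ncard = 1}.ncard : ℚ) = 2 * (2 ^ m - 1) / 3) ∧
    ({y : F | {x : F | x ^ 4 + x ^ 3 = y}.ncard = 2}.ncard = 1) ∧
    (({y : F | {x : F | x ^ 4 + x ^ 3 = y}.ncard = 4}.ncard : ℚ) = (2 ^ m - 4) / 12) ∧
    (∀ k : ℕ, 1 ≤ k → k ≠ 1 → k ≠ 2 → k ≠ 4 →
      {y : F | {x : F | x ^ 4 + x ^ 3 = y}.ncard = k}.ncard = 0) :=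
  omega_zero_m_even_general m hme F hF
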